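/- arXiv:1410.2489 — 2 statements merged into one kernel-verified Lean document; each statement's English description precedes it below -/
import Mathlib

section
/- Let p ≠ 2, 5 be prime and e(p) = v_p(F_{z(p)}). If p^{e(p)+1} divides k, then there is no positive integer n with n = k · z(n). -/
/-!
Since `p ∣ k ∣ n ∣ F_{z(n)}`, the entry point `z(p)` divides `z(n)`; write `z(n) = z(p) t`.
In `ℤ[√5]` we have `(1 + √5)^{z(p)} = a + b√5` with `b = 2^{z(p)-1} F_{z(p)}` and `p ∤ a`, so
`2^{z(p)t-1} F_{z(p)t}` is the `√5`-coordinate of `(a + b√5)^t`. Expanding binomially, every term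
of it but `t a^{t-1} b` is divisible by `p^{e(p) + v_p(t) + 1}` because `p` is odd (lifting the
exponent), hence `v_p(F_{z(n)}) ≤ e(p) + v_p(t)`. But `n = k z(n)` divides `F_{z(n)}`, and
`v_p(n) ≥ v_p(k) + v_p(t) ≥ e(p) + 1 + v_p(t)`.
-/

/-- The Fibonacci entry point: least positive `m` with `n ∣ Nat.fib m`. -/
noncomputable def fibEntry (n : ℕ) : ℕ := sInf {m | 0 < m ∧ n ∣ Nat.fib m}

open Nat (fib)

def fibShift (n : ℕ) : Equiv.Perm (ZMod n × ZMod n) where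
  toFun q := (q.2, q.1 + q.2)
  invFun q := (q.2 - q.1, q.1)
  left_inv q := by simp
  right_inv q := by simp

lemma fibShift_pow_apply (n i : ℕ) :
    (fibShift n ^ i) (0, 1) = ((fib i : ZMod n), (fib (i + 1) : ZMod n)) := by
  induction i with
  | zero => simp
  | succ i ih =>
    rw [pow_succ', Equiv.Perm.mul_apply, ih, Nat.fib_add_two]
    simp [fibShift]

lemma exists_pos_fib_dvd {n : ℕ} (hn : n ≠ 0) : ∃ m, 0 < m ∧ n ∣ fib m := by
  have : NeZero n := ⟨hn⟩
  refine ⟨orderOf (fibShift n), orderOf_pos _, ?_⟩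
  have h := fibShift_pow_apply n (orderOf (fibShift n))
  rw [pow_orderOf_eq_one, Equiv.Perm.one_apply, Prod.ext_iff] at h
  exact (ZMod.natCast_eq_zero_iff _ _).1 h.1.symm

lemma fibEntry_pos {n : ℕ} (hn : n ≠ 0) : 0 < fibEntry n :=
  (Nat.sInf_mem (exists_pos_fib_dvd hn)).1

lemma dvd_fib_fibEntry {n : ℕ} (hn : n ≠ 0) : n ∣ fib (fibEntry n) :=
  (Nat.sInf_mem (exists_pos_fib_dvd hn)).2

lemma dvd_fib_iff_fibEntry_dvd {n m : ℕ} (hn : n ≠ 0) : n ∣ fib m ↔ fibEntry n ∣ m := by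
  refine ⟨fun h => ?_, fun h => (dvd_fib_fibEntry hn).trans (Nat.fib_dvd _ _ h)⟩
  rcases Nat.eq_zero_or_pos m with rfl | hm
  · exact dvd_zero _
  have hgcd : fibEntry n ≤ Nat.gcd (fibEntry n) m :=
    Nat.sInf_le ⟨Nat.gcd_pos_of_pos_right _ hm,
      Nat.fib_gcd _ _ ▸ Nat.dvd_gcd (dvd_fib_fibEntry hn) h⟩
  rw [← Nat.le_antisymm (Nat.gcd_le_left _ (fibEntry_pos hn)) hgcd]
  exact Nat.gcd_dvd_right _ _

lemma Nat.pow_padicValNat_sub_dvd_choose {p : ℕ} [Fact p.Prime] {n k : ℕ} (hk : k ≠ 0) :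
    p ^ (padicValNat p n - padicValNat p k) ∣ n.choose k := by
  rcases Nat.lt_or_ge n k with hnk | hkn
  · simp [Nat.choose_eq_zero_of_lt hnk]
  obtain ⟨k, rfl⟩ := Nat.exists_eq_succ_of_ne_zero hk
  obtain ⟨n, rfl⟩ := Nat.exists_eq_succ_of_ne_zero (by omega : n ≠ 0)
  have hval := congrArg (padicValNat p) (Nat.add_one_mul_choose_eq n k)
  rw [padicValNat.mul n.succ_ne_zero (Nat.choose_pos (by omega)).ne',
    padicValNat.mul (Nat.choose_pos hkn).ne' k.succ_ne_zero] at hval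
  rw [padicValNat_dvd_iff_le (Nat.choose_pos hkn).ne']
  omega

lemma padicValNat_add_two_le {p : ℕ} [hp : Fact p.Prime] (hp2 : p ≠ 2) {j : ℕ} (hj : 2 ≤ j) :
    padicValNat p j + 2 ≤ j := by
  set w := padicValNat p j
  have hpj : p ^ w ≤ j := Nat.le_of_dvd (by omega) pow_padicValNat_dvd
  have h3p : 3 ^ w ≤ p ^ w := Nat.pow_le_pow_left (by have := hp.out.two_le; omega) w
  have h3w : w = 0 ∨ w + 2 ≤ 3 ^ w := by
    rcases Nat.eq_zero_or_pos w with hw | hw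
    · exact .inl hw
    · have := one_add_mul_le_pow (show (-2 : ℤ) ≤ 2 by norm_num) w
      right; zify; push_cast at this ⊢; linarith
  omega

theorem pow_dvd_add_pow_sub_sub {R : Type*} [CommRing R] {p : ℕ} [Fact p.Prime] (hp2 : p ≠ 2)
    {e : ℕ} (he : e ≠ 0) (x : R) {y : R} (hy : (p : R) ^ e ∣ y) (n : ℕ) :
    (p : R) ^ (e + padicValNat p n + 1) ∣ (x + y) ^ n - x ^ (n - 1) * y * n - x ^ n := by
  rcases n with - | n
  · simp
  have hterm : ∀ j, 2 ≤ j → (p : R) ^ (e + padicValNat p (n + 1) + 1) ∣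
      y ^ j * x ^ (n + 1 - j) * ((n + 1).choose j : R) := by
    intro j hj
    have hyj : (p : R) ^ (j * e) ∣ y ^ j := by
      rw [mul_comm, pow_mul]; exact pow_dvd_pow_of_dvd hy j
    have hchoose : (p : R) ^ (padicValNat p (n + 1) - padicValNat p j) ∣ ((n + 1).choose j : R) := by
      exact_mod_cast Nat.cast_dvd_cast (Nat.pow_padicValNat_sub_dvd_choose (by omega))
    have hexp : e + padicValNat p (n + 1) + 1 ≤
        j * e + (padicValNat p (n + 1) - padicValNat p j) := by
      have h1 := Nat.mul_le_mul_right e (padicValNat_add_two_le hp2 hj)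
      have h2 : padicValNat p j ≤ padicValNat p j * e := Nat.le_mul_of_pos_right _ (by omega)
      rw [add_mul] at h1
      omega
    rw [mul_right_comm]
    exact ((pow_dvd_pow _ hexp).trans (pow_add (p : R) _ _ ▸ mul_dvd_mul hyj hchoose)).mul_right _
  rw [add_comm x, add_pow, Finset.sum_range_succ', Finset.sum_range_succ']
  convert Finset.dvd_sum fun i _ => hterm (i + 2) (by omega) using 1
  simp only [zero_add, pow_one, add_tsub_cancel_right, Nat.choose_one_right, Nat.cast_add,
    Nat.cast_one, pow_zero, tsub_zero, one_mul, Nat.choose_zero_right, mul_one]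
  ring

theorem Zsqrtd.pow_dvd_im_pow_sub {d : ℤ} {p : ℕ} [Fact p.Prime] (hp2 : p ≠ 2) {e : ℕ}
    (he : e ≠ 0) (a : ℤ) {b : ℤ} (hb : (p : ℤ) ^ e ∣ b) (n : ℕ) :
    (p : ℤ) ^ (e + padicValNat p n + 1) ∣ ((⟨a, b⟩ : ℤ√d) ^ n).im - a ^ (n - 1) * b * n := by
  have hb' : (p : ℤ√d) ^ e ∣ Zsqrtd.sqrtd * (b : ℤ√d) := by
    exact_mod_cast (map_dvd (Int.castRingHom (ℤ√d)) hb).mul_left _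
  have h := pow_dvd_add_pow_sub_sub hp2 he (a : ℤ√d) hb' n
  rw [← Zsqrtd.decompose] at h
  have him := ((Zsqrtd.intCast_dvd _ _).1 (by exact_mod_cast h)).2
  have hlin : ((a ^ (n - 1) : ℤ) : ℤ√d) * (Zsqrtd.sqrtd * (b : ℤ√d)) * (n : ℤ√d) =
      ((a ^ (n - 1) * b * n : ℤ) : ℤ√d) * Zsqrtd.sqrtd := by
    push_cast; ring
  rwa [hlin, Zsqrtd.im_sub, Zsqrtd.im_sub, Zsqrtd.im_smul, Zsqrtd.im_sqrtd, Zsqrtd.im_intCast,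
    mul_one, sub_zero, Nat.cast_pow] at him

-- The real part is `2^n L_{n+1}`, with `L` the Lucas numbers.
lemma one_add_sqrtd_pow_succ (n : ℕ) : (1 + Zsqrtd.sqrtd : ℤ√5) ^ (n + 1) =
    ⟨2 ^ n * (2 * fib n + fib (n + 1)), 2 ^ n * fib (n + 1)⟩ := by
  induction n with
  | zero => ext <;> simp
  | succ n ih =>
    rw [pow_succ, ih]
    ext <;> simp only [Zsqrtd.re_mul, Zsqrtd.im_mul, Zsqrtd.re_add, Zsqrtd.im_add, Zsqrtd.re_one,
      Zsqrtd.im_one, Zsqrtd.re_sqrtd, Zsqrtd.im_sqrtd, add_zero, zero_add, mul_one,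
      Nat.fib_add_two, Nat.cast_add] <;> ring

lemma not_dvd_two_mul_fib_add_fib_succ {p : ℕ} (hp : p.Prime) (hp2 : p ≠ 2) {s : ℕ}
    (hps : p ∣ fib (s + 1)) : ¬ p ∣ 2 * fib s + fib (s + 1) := by
  intro h
  rcases (Nat.Prime.dvd_mul hp).1 ((Nat.dvd_add_left hps).1 h) with h2 | hs
  · exact hp2 ((Nat.prime_dvd_prime_iff_eq hp Nat.prime_two).1 h2)
  · exact hp.one_lt.ne' (Nat.eq_one_of_dvd_coprimes (Nat.fib_coprime_fib_succ s) hs hps)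

theorem padicValNat_fib_mul_le {p : ℕ} [hp : Fact p.Prime] (hp2 : p ≠ 2) {m : ℕ} (hm : m ≠ 0)
    (hpm : p ∣ fib m) {t : ℕ} (ht : t ≠ 0) :
    padicValNat p (fib (m * t)) ≤ padicValNat p (fib m) + padicValNat p t := by
  obtain ⟨s, rfl⟩ : ∃ s, m = s + 1 := ⟨m - 1, by omega⟩
  obtain ⟨r, hr⟩ : ∃ r, (s + 1) * t = r + 1 :=
    ⟨(s + 1) * t - 1, by have := Nat.mul_ne_zero hm ht; omega⟩
  set e := padicValNat p (fib (s + 1))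
  set v := padicValNat p t
  set A := 2 ^ s * (2 * fib s + fib (s + 1))
  set B := 2 ^ s * fib (s + 1)
  have hp2' : ¬ p ∣ 2 := fun h => hp2 ((Nat.prime_dvd_prime_iff_eq hp.out Nat.prime_two).1 h)
  have hpA : ¬ p ∣ A := fun h => ((Nat.Prime.dvd_mul hp.out).1 h).elim
    (fun h2 => hp2' (hp.out.dvd_of_dvd_pow h2)) (not_dvd_two_mul_fib_add_fib_succ hp.out hp2 hpm)
  have hfib0 : fib (s + 1) ≠ 0 := by simp
  have hA0 : A ≠ 0 := fun h => hpA (h ▸ dvd_zero p)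
  have hval : padicValNat p (A ^ (t - 1) * B * t) = e + v := by
    rw [padicValNat.mul (by simp [B, hA0]) ht, padicValNat.mul (by simp [hA0]) (by simp [B]),
      padicValNat.mul (by simp) hfib0, padicValNat.pow, padicValNat.eq_zero_of_not_dvd hpA,
      padicValNat.pow, padicValNat.eq_zero_of_not_dvd hp2']
    simp only [mul_zero, zero_add]; rfl
  have hB : (p : ℤ) ^ e ∣ (B : ℤ) := by
    exact_mod_cast (pow_padicValNat_dvd (n := fib (s + 1))).mul_left (2 ^ s)
  have hcong := Zsqrtd.pow_dvd_im_pow_sub (d := 5) hp2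
    (Nat.one_le_iff_ne_zero.1 (one_le_padicValNat_of_dvd hfib0 hpm)) (A : ℤ) hB t
  have him : ((⟨A, B⟩ : ℤ√5) ^ t).im = 2 ^ r * fib (r + 1) := by
    have h : (1 + Zsqrtd.sqrtd : ℤ√5) ^ (s + 1) = ⟨A, B⟩ := by
      rw [one_add_sqrtd_pow_succ]; ext <;> simp [A, B]
    rw [← h, ← pow_mul, hr, one_add_sqrtd_pow_succ]
  by_contra! hlt
  have hdvd : p ^ (e + v + 1) ∣ fib (r + 1) := hr ▸ (padicValNat_dvd_iff _ _).2 (.inr hlt)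
  rw [him] at hcong
  have hprod : (p : ℤ) ^ (e + v + 1) ∣ ((A ^ (t - 1) * B * t : ℕ) : ℤ) := by
    push_cast
    exact (dvd_sub_right (Dvd.dvd.mul_left (by exact_mod_cast hdvd) _)).1 hcong
  exact pow_succ_padicValNat_not_dvd (p := p) (n := A ^ (t - 1) * B * t) (by simp [B, hA0, ht])
    (hval ▸ Int.natCast_dvd_natCast.1 (by exact_mod_cast hprod))

theorem no_self_fib_divisor_of_prime_pow_dvd_general (p : ℕ) (hp : p.Prime) (hp2 : p ≠ 2)
    (k : ℕ)
    (h : p ^ (padicValNat p (Nat.fib (fibEntry p)) + 1) ∣ k) :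
    ¬ ∃ n : ℕ, 0 < n ∧ n = k * fibEntry n := by
  have : Fact p.Prime := ⟨hp⟩
  rintro ⟨n, hn, hnk⟩
  have hk : k ≠ 0 := by rintro rfl; omega
  have hz : fibEntry n ≠ 0 := by intro h0; rw [h0] at hnk; omega
  have hpn : p ∣ n :=
    (dvd_pow_self p (Nat.succ_ne_zero _)).trans (h.trans (hnk ▸ dvd_mul_right _ _))
  obtain ⟨t, ht⟩ := (dvd_fib_iff_fibEntry_dvd hp.ne_zero).1 (hpn.trans (dvd_fib_fibEntry hn.ne'))
  have ht0 : t ≠ 0 := by rintro rfl; exact hz (by simpa using ht)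
  have hvt : padicValNat p t ≤ padicValNat p (fibEntry n) :=
    (padicValNat_dvd_iff_le hz).1 (pow_padicValNat_dvd.trans (ht ▸ dvd_mul_left t _))
  have key : padicValNat p (fib (fibEntry p)) + 1 + padicValNat p t ≤
      padicValNat p (fib (fibEntry p)) + padicValNat p t := calc
    _ ≤ padicValNat p k + padicValNat p (fibEntry n) :=
      add_le_add ((padicValNat_dvd_iff_le hk).1 h) hvt
    _ = padicValNat p (k * fibEntry n) := (padicValNat.mul hk hz).symm
    _ = padicValNat p n := by rw [← hnk]
    _ ≤ padicValNat p (fib (fibEntry n)) := (padicValNat_dvd_iff_le (by simp [hz])).1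
      (pow_padicValNat_dvd.trans (dvd_fib_fibEntry hn.ne'))
    _ ≤ _ := ht ▸ padicValNat_fib_mul_le hp2 (fibEntry_pos hp.ne_zero).ne'
      (dvd_fib_fibEntry hp.ne_zero) ht0
  omega

theorem no_self_fib_divisor_of_prime_pow_dvd (p : ℕ) (hp : p.Prime) (hp2 : p ≠ 2)
    (hp5 : p ≠ 5) (k : ℕ) (hk : 0 < k)
    (h : p ^ (padicValNat p (Nat.fib (fibEntry p)) + 1) ∣ k) :
    ¬ ∃ n : ℕ, 0 < n ∧ n = k * fibEntry n :=
  no_self_fib_divisor_of_prime_pow_dvd_general p hp hp2 k h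
end

section
/- For every integer a ≥ 3, z(2^a) = 3 · 2^{a-2}, where z is the Fibonacci entry point. -/
open Nat

section FibEntry

variable {n m : ℕ}

lemma fibEntry_pos_and_dvd_fib (hm : 0 < m) (h : n ∣ fib m) :
    0 < fibEntry n ∧ n ∣ fib (fibEntry n) :=
  Nat.sInf_mem (s := {m | 0 < m ∧ n ∣ fib m}) ⟨m, hm, h⟩

lemma fibEntry_dvd (hm : 0 < m) (h : n ∣ fib m) : fibEntry n ∣ m := by
  obtain ⟨hz, hzd⟩ := fibEntry_pos_and_dvd_fib hm h
  have hgcd : n ∣ fib ((fibEntry n).gcd m) := by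
    rw [fib_gcd]
    exact Nat.dvd_gcd hzd h
  have hle : fibEntry n ≤ (fibEntry n).gcd m :=
    Nat.sInf_le ⟨Nat.gcd_pos_of_pos_left m hz, hgcd⟩
  rw [← Nat.gcd_eq_left_iff_dvd]
  exact le_antisymm (Nat.gcd_le_left m hz) hle

/-- A smaller candidate would be a proper divisor of `m`, hence divide some `m / p`. -/
lemma fibEntry_eq_of_forall_prime_dvd (hm : 0 < m) (h : n ∣ fib m)
    (hmin : ∀ p, p.Prime → p ∣ m → ¬ n ∣ fib (m / p)) : fibEntry n = m := by
  obtain ⟨hz, hzd⟩ := fibEntry_pos_and_dvd_fib hm h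
  obtain ⟨q, hq⟩ := fibEntry_dvd hm h
  by_contra hne
  have hq1 : q ≠ 1 := by rintro rfl; exact hne (by simpa using hq.symm)
  have hpq : q.minFac ∣ q := Nat.minFac_dvd q
  have hdiv : m / q.minFac = fibEntry n * (q / q.minFac) := by
    rw [hq, Nat.mul_div_assoc _ hpq]
  refine hmin _ (Nat.minFac_prime hq1) (hq ▸ dvd_mul_of_dvd_right hpq _) ?_
  rw [hdiv]
  exact hzd.trans (fib_dvd _ _ (dvd_mul_right _ _))

end FibEntry

lemma not_two_dvd_fib_of_not_three_dvd {n : ℕ} (h : ¬ 3 ∣ n) : ¬ 2 ∣ fib n := by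
  intro h2
  have hcop : Nat.gcd 3 n = 1 := (Nat.Prime.coprime_iff_not_dvd Nat.prime_three).mpr h
  have : 2 ∣ Nat.gcd (fib 3) (fib n) := Nat.dvd_gcd (dvd_refl 2) h2
  rw [← fib_gcd, hcop] at this
  exact absurd this (by decide)

lemma padicValNat_two_fib_two_mul {n : ℕ} (hn : 0 < n) (h4 : 4 ∣ fib n) :
    padicValNat 2 (fib (2 * n)) = padicValNat 2 (fib n) + 1 := by
  obtain ⟨c, hc⟩ := h4
  have hodd : ¬ 2 ∣ fib (n + 1) := fun h2 =>
    Nat.not_coprime_of_dvd_of_dvd one_lt_two (by omega) h2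
      (fib_coprime_fib_succ n)
  have hle : fib n ≤ fib (n + 1) := fib_le_fib_succ
  have hlucas : 2 * fib (n + 1) - fib n = 2 * (fib (n + 1) - 2 * c) := by omega
  have hodd' : ¬ 2 ∣ fib (n + 1) - 2 * c := by omega
  rw [fib_two_mul, hlucas, padicValNat.mul (fib_pos.mpr hn).ne' (by omega),
    padicValNat.mul two_ne_zero (by omega), padicValNat_self,
    padicValNat.eq_zero_of_not_dvd hodd']

lemma padicValNat_two_fib_three_mul_two_pow (k : ℕ) :
    padicValNat 2 (fib (3 * 2 ^ (k + 1))) = k + 3 := by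
  induction k with
  | zero => rw [show fib (3 * 2 ^ (0 + 1)) = 2 ^ 3 from rfl, padicValNat.prime_pow]
  | succ k ih =>
    have h4 : 2 ^ 2 ∣ fib (3 * 2 ^ (k + 1)) :=
      (padicValNat_dvd_iff_le (fib_pos.mpr (by positivity)).ne').mpr (by omega)
    rw [show 3 * 2 ^ (k + 1 + 1) = 2 * (3 * 2 ^ (k + 1)) by ring,
      padicValNat_two_fib_two_mul (by positivity) h4, ih]

lemma not_two_pow_dvd_fib_three_mul_two_pow (k : ℕ) : ¬ 2 ^ (k + 3) ∣ fib (3 * 2 ^ k) := by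
  cases k with
  | zero => decide
  | succ k =>
    rw [padicValNat_dvd_iff_le (fib_pos.mpr (by positivity)).ne',
      padicValNat_two_fib_three_mul_two_pow]
    omega

theorem fibEntry_two_pow (a : ℕ) (ha : 3 ≤ a) :
    fibEntry (2 ^ a) = 3 * 2 ^ (a - 2) := by
  obtain ⟨k, rfl⟩ : ∃ k, a = k + 3 := ⟨a - 3, by omega⟩
  rw [show k + 3 - 2 = k + 1 by omega]
  refine fibEntry_eq_of_forall_prime_dvd (by positivity) ?_ fun p hp hpm => ?_
  · rw [padicValNat_dvd_iff_le (fib_pos.mpr (by positivity)).ne',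
      padicValNat_two_fib_three_mul_two_pow]
  rcases (Nat.Prime.dvd_mul hp).mp hpm with h3 | h2
  · obtain rfl := (Nat.prime_dvd_prime_iff_eq hp Nat.prime_three).mp h3
    rw [Nat.mul_div_cancel_left _ three_pos]
    refine fun h => not_two_dvd_fib_of_not_three_dvd ?_ ((dvd_pow_self 2 (by omega)).trans h)
    exact (Nat.Prime.coprime_iff_not_dvd Nat.prime_three).mp (Nat.Coprime.pow_right _ (by decide))
  · obtain rfl := (Nat.prime_dvd_prime_iff_eq hp Nat.prime_two).mp (hp.dvd_of_dvd_pow h2)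
    rw [show 3 * 2 ^ (k + 1) / 2 = 3 * 2 ^ k by simp [pow_succ, ← mul_assoc]]
    exact not_two_pow_dvd_fib_three_mul_two_pow k
end
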